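/- Let S be a (finite) family of subgroups of a finite abelian group K. Then the intersection over H ∈ S of the kernels of the maps R_H : ℂ[K] → ℂ[H*] equals the ℂ-linear span of the basis elements e_g with g ∈ K \ (∪_{H∈S} H). -/

import Mathlib

/-- The character group `K* = Hom(K, ℂˣ)` of a finite abelian group is finite. -/
instance charFinite (K : Type*) [CommGroup K] [Finite K] : Finite (K →* ℂˣ) := by
  have : Fintype K := .ofFinite _
  let S := rootsOfUnity (Fintype.card K) ℂ
  have fF : Finite (K →* S) := .of_injective _ DFunLike.coe_injective
  refine Finite.of_surjective (fun f : K →* S ↦ (Subgroup.subtype _).comp f) fun f ↦ ?_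
  have H : ∀ a, f a ∈ S := by
    intro a
    simp only [mem_rootsOfUnity, ← map_pow, pow_card_eq_one, map_one, S]
  exact ⟨MonoidHom.codRestrict f S H, MonoidHom.ext fun _ ↦ rfl⟩

noncomputable instance charFintype (K : Type*) [CommGroup K] [Finite K] : Fintype (K →* ℂˣ) :=
  Fintype.ofFinite _

/-- `ê_α = ∑_{g ∈ K} α(g)⁻¹ e_g` in the group algebra `ℂ[K]`. -/
noncomputable def ehat {K : Type*} [CommGroup K] [Fintype K] (α : K →* ℂˣ) :
    MonoidAlgebra ℂ K :=
  ∑ g : K, MonoidAlgebra.single g ((((α g)⁻¹ : ℂˣ) : ℂ))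

/-- `ψ_β : ℂ[K] → ℂ[K]`, the linear map determined by `ψ_β(e_g) = β(g) e_g`. -/
noncomputable def psi {K : Type*} [CommGroup K] [Fintype K] (β : K →* ℂˣ) :
    MonoidAlgebra ℂ K →ₗ[ℂ] MonoidAlgebra ℂ K :=
  (Finsupp.lift (MonoidAlgebra ℂ K) ℂ K fun g => ((β g : ℂˣ) : ℂ) • MonoidAlgebra.single g 1) ∘ₗ
    (MonoidAlgebra.coeffLinearEquiv ℂ).toLinearMap

/-- `R_H : ℂ[K] → ℂ[H*]`, the linear map with `R_H(e_g) = ∑_{α ∈ K*} α(g) e_{α|_H}`. -/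
noncomputable def RH {K : Type*} [CommGroup K] [Fintype K] (H : Subgroup K) :
    MonoidAlgebra ℂ K →ₗ[ℂ] MonoidAlgebra ℂ (H →* ℂˣ) :=
  (Finsupp.lift (MonoidAlgebra ℂ (H →* ℂˣ)) ℂ K fun g =>
    ∑ α : K →* ℂˣ, ((α g : ℂˣ) : ℂ) • MonoidAlgebra.single (α.comp H.subtype) 1) ∘ₗ
    (MonoidAlgebra.coeffLinearEquiv ℂ).toLinearMap

/-!
If `g ∉ H`, some character `χ` of `K` is trivial on `H` but `χ g ≠ 1`. Multiplying by `χ`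
permutes `K*` without changing restrictions to `H`, so `R_H e_g` is fixed by the scalar
`χ g ≠ 1` and vanishes. Conversely, for `h ∈ H`, pairing `R_H x` with the characters of `H`
evaluated at `h⁻¹` gives `|K*|` times the coefficient of `x` at `h`, by orthogonality
`∑_α α(g h⁻¹) = |K*| δ_{g,h}`. Hence `ker R_H` consists of the elements supported off `H`, and
intersecting over `S` gives the span of the `e_g` with `g` outside every `H ∈ S`.
-/

section Characters

variable {K : Type*} [CommGroup K] [Finite K]

lemma exists_char_le_ker_apply_ne_one {H : Subgroup K} {g : K} (hg : g ∉ H) :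
    ∃ χ : K →* ℂˣ, H ≤ χ.ker ∧ χ g ≠ 1 := by
  have : NeZero (Monoid.exponent (K ⧸ H) : ℂ) :=
    ⟨by exact_mod_cast Monoid.exponent_ne_zero_of_finite⟩
  obtain ⟨φ, hφ⟩ := CommGroup.exists_apply_ne_one_of_hasEnoughRootsOfUnity (K ⧸ H) ℂ
    (a := QuotientGroup.mk g) (by rwa [ne_eq, QuotientGroup.eq_one_iff])
  refine ⟨φ.comp (QuotientGroup.mk' H), fun h hh => ?_, hφ⟩
  simp [MonoidHom.mem_ker, (QuotientGroup.eq_one_iff h).mpr hh]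

lemma sum_char_smul_eq_zero {M : Type*} [AddCommGroup M] [Module ℂ M]
    (f : (K →* ℂˣ) → M) {χ : K →* ℂˣ} (hf : ∀ α, f (χ * α) = f α) {g : K} (hg : χ g ≠ 1) :
    ∑ α : K →* ℂˣ, ((α g : ℂˣ) : ℂ) • f α = 0 := by
  set T := ∑ α : K →* ℂˣ, ((α g : ℂˣ) : ℂ) • f α
  have hfix : ((χ g : ℂˣ) : ℂ) • T = T := by
    rw [Finset.smul_sum]
    exact Fintype.sum_bijective (χ * ·) (Group.mulLeft_bijective χ) _ _
      fun α => by simp [hf, smul_smul]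
  have hsub : (((χ g : ℂˣ) : ℂ) - 1) • T = 0 := by rw [sub_smul, one_smul, hfix, sub_self]
  exact (smul_eq_zero.mp hsub).resolve_left (sub_ne_zero.mpr (by simpa using hg))

lemma sum_char_apply_eq_ite [DecidableEq K] (k : K) :
    ∑ α : K →* ℂˣ, ((α k : ℂˣ) : ℂ) = if k = 1 then (Fintype.card (K →* ℂˣ) : ℂ) else 0 := by
  split_ifs with hk
  · simp [hk]
  · obtain ⟨χ, -, hχ⟩ := exists_char_le_ker_apply_ne_one (H := ⊥) (by simpa using hk)
    simpa using sum_char_smul_eq_zero (fun _ => (1 : ℂ)) (χ := χ) (fun _ => rfl) hχ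

end Characters

section Restriction

variable {K : Type*} [CommGroup K] [Fintype K]

@[simp]
lemma RH_single (H : Subgroup K) (g : K) :
    RH H (MonoidAlgebra.single g 1) =
      ∑ α : K →* ℂˣ, ((α g : ℂˣ) : ℂ) • MonoidAlgebra.single (α.comp H.subtype) 1 := by
  simp [RH]

lemma RH_single_eq_zero {H : Subgroup K} {g : K} (hg : g ∉ H) :
    RH H (MonoidAlgebra.single g 1) = 0 := by
  obtain ⟨χ, hχH, hχg⟩ := exists_char_le_ker_apply_ne_one hg
  refine (RH_single H g).trans (sum_char_smul_eq_zero _ (fun α => ?_) hχg)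
  congr 1
  ext h
  simp [MonoidHom.mem_ker.mp (hχH h.2)]

lemma lift_eval_inv_RH (H : Subgroup K) (h : H) (x : MonoidAlgebra ℂ K) :
    MonoidAlgebra.lift ℂ ℂ (H →* ℂˣ) ((Units.coeHom ℂ).comp (MonoidHom.eval h⁻¹)) (RH H x) =
      Fintype.card (K →* ℂˣ) * x.coeff h := by
  classical
  suffices (MonoidAlgebra.lift ℂ ℂ (H →* ℂˣ)
      ((Units.coeHom ℂ).comp (MonoidHom.eval h⁻¹))).toLinearMap ∘ₗ RH H =
      (Fintype.card (K →* ℂˣ) : ℂ) •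
        (Finsupp.lapply (h : K) ∘ₗ (MonoidAlgebra.coeffLinearEquiv ℂ).toLinearMap) from
    LinearMap.congr_fun this x
  refine MonoidAlgebra.lhom_ext' fun g => LinearMap.ext_ring ?_
  have horth := sum_char_apply_eq_ite (g * (h : K)⁻¹)
  simp only [mul_inv_eq_one, map_mul, map_inv, Units.val_mul, Units.val_inv_eq_inv_val] at horth
  simp [MonoidAlgebra.lift_single, horth, Finsupp.single_apply]

lemma ker_RH (H : Subgroup K) :
    LinearMap.ker (RH H) = MonoidAlgebra.supported ℂ ℂ ((H : Set K)ᶜ) := by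
  apply le_antisymm
  · intro x hx
    rw [MonoidAlgebra.mem_supported']
    intro h hh
    have hpair := lift_eval_inv_RH H ⟨h, not_not.mp hh⟩ x
    rw [LinearMap.mem_ker.mp hx, map_zero, eq_comm, mul_eq_zero] at hpair
    exact hpair.resolve_left (by exact_mod_cast Fintype.card_ne_zero)
  · rw [MonoidAlgebra.supported_eq_span_single, Submodule.span_le]
    rintro _ ⟨g, hg, rfl⟩
    exact RH_single_eq_zero hg

end Restriction

/-- for a family `S` of subgroups of `K`, the intersection of the kernels of
the maps `R_H : ℂ[K] → ℂ[H*]`, `H ∈ S`, equals the span of the `e_g` with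
`g ∈ K \ (∪_{H ∈ S} H)`. -/
theorem stmt_16 (K : Type*) [CommGroup K] [Fintype K] (S : Set (Subgroup K)) :
    (⨅ H ∈ S, LinearMap.ker (RH H)) =
      Submodule.span ℂ {x : MonoidAlgebra ℂ K |
        ∃ g : K, (∀ H ∈ S, g ∉ H) ∧ x = MonoidAlgebra.single g (1 : ℂ)} := by
  have hgens : {x : MonoidAlgebra ℂ K | ∃ g : K, (∀ H ∈ S, g ∉ H) ∧ x = MonoidAlgebra.single g 1} =
      (MonoidAlgebra.single · 1) '' ⋂ H ∈ S, (H : Set K)ᶜ := by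
    ext x
    simp [eq_comm]
  rw [hgens, ← MonoidAlgebra.supported_eq_span_single]
  ext x
  simp [ker_RH, Submodule.mem_iInf, MonoidAlgebra.mem_supported]
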